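/- The generating function F(u,v,x) of rooted plane trees with at most one marked corner per node, where every node of arity 1 has exactly one marked corner (u marks leaves, v marks marked corners, x marks edges), satisfies F = u + x²F²/(1−xF) + v/(1−xF)² − v. -/

import Mathlib

open MvPolynomial

/-- Rooted plane trees with marked corners: a node carries its list of
children and a list of booleans of length (arity + 1) indicating which of its
corners are marked. -/
inductive PTree where
  | node : List PTree → List Bool → PTree

namespace PTree

/-- Number of edges. -/
def edges : PTree → ℕ
  | .node cs _ => cs.length + (cs.attach.map (fun c => edges c.1)).sum
decreasing_by
  have := List.sizeOf_lt_of_mem c.2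
  simp only [PTree.node.sizeOf_spec]; omega

/-- Number of leaves (a single vertex counts as a leaf). -/
def leaves : PTree → ℕ
  | .node cs _ =>
      if cs.isEmpty then 1 else (cs.attach.map (fun c => leaves c.1)).sum
decreasing_by
  have := List.sizeOf_lt_of_mem c.2
  simp only [PTree.node.sizeOf_spec]; omega

/-- Number of marked corners. -/
def markCount : PTree → ℕ
  | .node cs m => m.count true + (cs.attach.map (fun c => markCount c.1)).sum
decreasing_by
  have := List.sizeOf_lt_of_mem c.2
  simp only [PTree.node.sizeOf_spec]; omega

end PTree

/-- Validity for the class of Section "Counting saturated structures":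
the marks list has length arity + 1, leaves carry no marks, each node has at
most one marked corner, and each node of arity 1 has exactly one marked
corner. -/
inductive Valid10 : PTree → Prop
  | node (cs : List PTree) (m : List Bool) :
      m.length = cs.length + 1 →
      (cs = [] → m.count true = 0) →
      m.count true ≤ 1 →
      (cs.length = 1 → m.count true = 1) →
      (∀ c ∈ cs, Valid10 c) →
      Valid10 (.node cs m)

/-- `F(u,v,x)`: generating function of the class; `u = X 0` marks leaves,
`v = X 1` marks marked corners, `x` marks edges. -/
noncomputable def Fgf : PowerSeries (MvPolynomial (Fin 2) ℚ) :=
  PowerSeries.mk (fun e =>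
    ∑ᶠ T : {T : PTree // Valid10 T ∧ T.edges = e},
      (X 0) ^ T.1.leaves * (X 1) ^ T.1.markCount)

local notation "u" => PowerSeries.C (R := MvPolynomial (Fin 2) ℚ) (X 0)
local notation "v" => PowerSeries.C (R := MvPolynomial (Fin 2) ℚ) (X 1)
local notation "x" => (PowerSeries.X : PowerSeries (MvPolynomial (Fin 2) ℚ))

/-!
A tree with `e ≥ 1` edges is a root of some arity `k ≥ 1` carrying a forest of `k` trees with
`e - k` edges in total, so its subtrees are counted by the coefficient of `xᵏFᵏ`; the admissible
markings of the `k + 1` root corners contribute `c_k = 1 + (k + 1)v` for `k ≥ 2` and `c_1 = 2v`.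
Hence `F = u + ∑_{k ≥ 1} c_k (xF)ᵏ`, and the geometric sums `∑_{k ≥ 2} Aᵏ = A²/(1 - A)` and
`∑_{k ≥ 0} (k + 1)Aᵏ = 1/(1 - A)²` at `A = xF` give the identity. As `x ∣ xF`, all these series can
be replaced by their truncations at degree `N`, which agree with them modulo `x^(N+1)`.
-/

open Finset

namespace PTree

@[simp] lemma edges_node (cs : List PTree) (m : List Bool) :
    (node cs m).edges = cs.length + (cs.map edges).sum := by
  rw [edges, List.attach_map_val]

@[simp] lemma leaves_node (cs : List PTree) (m : List Bool) :
    (node cs m).leaves = if cs.isEmpty then 1 else (cs.map leaves).sum := by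
  rw [leaves, List.attach_map_val]

@[simp] lemma markCount_node (cs : List PTree) (m : List Bool) :
    (node cs m).markCount = m.count true + (cs.map markCount).sum := by
  rw [markCount, List.attach_map_val]

end PTree

lemma Set.Finite.lists_length_le {α : Type*} {s : Set α} (hs : s.Finite) (n : ℕ) :
    {l : List α | l.length ≤ n ∧ ∀ a ∈ l, a ∈ s}.Finite := by
  have := hs.to_subtype
  refine ((List.finite_length_le s n).image (List.map Subtype.val)).subset ?_
  rintro l ⟨hn, hl⟩
  exact ⟨l.attachWith (· ∈ s) hl, by simpa using hn, List.attachWith_map_subtype_val hl⟩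

noncomputable def boolListsWithCount (n j : ℕ) : Finset (List Bool) :=
  {m ∈ (List.finite_length_eq Bool n).toFinset | m.count true = j}

@[simp] lemma mem_boolListsWithCount {n j : ℕ} {m : List Bool} :
    m ∈ boolListsWithCount n j ↔ m.length = n ∧ m.count true = j := by
  simp [boolListsWithCount]

lemma boolListsWithCount_succ_zero (n : ℕ) :
    boolListsWithCount (n + 1) 0 = (boolListsWithCount n 0).image (false :: ·) := by
  ext (_ | ⟨_ | _, m⟩) <;> simp

lemma boolListsWithCount_succ_succ (n j : ℕ) :
    boolListsWithCount (n + 1) (j + 1) =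
      (boolListsWithCount n (j + 1)).image (false :: ·) ∪
        (boolListsWithCount n j).image (true :: ·) := by
  ext (_ | ⟨_ | _, m⟩) <;> simp

theorem card_boolListsWithCount (n j : ℕ) : #(boolListsWithCount n j) = n.choose j := by
  induction n generalizing j with
  | zero =>
    cases j
    · rw [show boolListsWithCount 0 0 = {[]} by ext (_ | _) <;> simp]; rfl
    · rw [show boolListsWithCount 0 _ = ∅ by ext (_ | _) <;> simp]; rfl
  | succ n ih =>
    cases j with
    | zero =>
      rw [boolListsWithCount_succ_zero, card_image_of_injective _ List.cons_injective, ih,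
        Nat.choose_zero_right, Nat.choose_zero_right]
    | succ j =>
      rw [boolListsWithCount_succ_succ, card_union_of_disjoint,
        card_image_of_injective _ List.cons_injective,
        card_image_of_injective _ List.cons_injective, ih, ih, Nat.choose_succ_succ, add_comm]
      refine disjoint_left.2 fun m h₁ h₂ => ?_
      obtain ⟨_, -, rfl⟩ := mem_image.1 h₁
      obtain ⟨_, -, h⟩ := mem_image.1 h₂
      simp at h

/-- The leaf condition of `Valid10` is left out: only arities `k ≥ 1` use this set. -/
noncomputable def rootMarks (k : ℕ) : Finset (List Bool) :=
  {m ∈ (List.finite_length_eq Bool (k + 1)).toFinset |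
    m.count true ≤ 1 ∧ (k = 1 → m.count true = 1)}

@[simp] lemma mem_rootMarks {k : ℕ} {m : List Bool} :
    m ∈ rootMarks k ↔ m.length = k + 1 ∧ m.count true ≤ 1 ∧ (k = 1 → m.count true = 1) := by
  simp [rootMarks]

lemma sum_pow_count_boolListsWithCount {R : Type*} [CommSemiring R] (t : R) (n j : ℕ) :
    ∑ m ∈ boolListsWithCount n j, t ^ m.count true = n.choose j * t ^ j := by
  rw [sum_congr rfl fun m hm => by rw [(mem_boolListsWithCount.1 hm).2], sum_const,
    card_boolListsWithCount, nsmul_eq_mul]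

theorem sum_pow_count_rootMarks {R : Type*} [CommSemiring R] (t : R) {k : ℕ} (hk : 1 ≤ k) :
    ∑ m ∈ rootMarks k, t ^ m.count true = (if k = 1 then 0 else 1) + (k + 1) * t := by
  obtain rfl | hk := hk.eq_or_lt
  · rw [show rootMarks 1 = boolListsWithCount 2 1 by ext; simp; omega,
      sum_pow_count_boolListsWithCount]
    norm_num
  · have hdisj : Disjoint (boolListsWithCount (k + 1) 0) (boolListsWithCount (k + 1) 1) :=
      disjoint_left.2 fun m h₁ h₂ => by simp_all
    rw [show rootMarks k = boolListsWithCount (k + 1) 0 ∪ boolListsWithCount (k + 1) 1 by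
        ext; simp; omega,
      sum_union hdisj, sum_pow_count_boolListsWithCount, sum_pow_count_boolListsWithCount,
      if_neg hk.ne']
    simp

namespace PTree

def children : PTree → List PTree
  | node cs _ => cs

def marks : PTree → List Bool
  | node _ m => m

@[simp] lemma node_children_marks (T : PTree) : node T.children T.marks = T := by
  cases T; rfl

noncomputable def weight (T : PTree) : MvPolynomial (Fin 2) ℚ :=
  X 0 ^ T.leaves * X 1 ^ T.markCount

lemma prod_map_weight (cs : List PTree) :
    (cs.map weight).prod = X 0 ^ (cs.map leaves).sum * X 1 ^ (cs.map markCount).sum := by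
  induction cs with
  | nil => simp
  | cons c cs ih =>
    simp only [List.map_cons, List.prod_cons, List.sum_cons, ih, weight, pow_add]
    ring

lemma weight_node {cs : List PTree} (m : List Bool) (h : cs ≠ []) :
    weight (node cs m) = X 1 ^ m.count true * (cs.map weight).prod := by
  rw [weight, leaves_node, markCount_node, if_neg (by simpa using h), prod_map_weight, pow_add]
  ring

lemma valid10_node_iff {cs : List PTree} {m : List Bool} (h : cs ≠ []) :
    Valid10 (node cs m) ↔ m ∈ rootMarks cs.length ∧ ∀ c ∈ cs, Valid10 c := by
  constructor
  · rintro ⟨_, _, hm, -, hle, hone, hcs⟩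
    exact ⟨mem_rootMarks.2 ⟨hm, hle, hone⟩, hcs⟩
  · rintro ⟨hm, hcs⟩
    obtain ⟨hm, hle, hone⟩ := mem_rootMarks.1 hm
    exact .node cs m hm (absurd · h) hle hone hcs

lemma edges_le_sum_of_mem {cs : List PTree} {c : PTree} (hc : c ∈ cs) :
    c.edges ≤ (cs.map edges).sum :=
  List.le_sum_of_mem (List.mem_map_of_mem hc)

end PTree

open PTree

theorem finite_setOf_valid10_edges_eq (e : ℕ) : {T : PTree | Valid10 T ∧ T.edges = e}.Finite := by
  induction e using Nat.strong_induction_on with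
  | _ e ih =>
  have hsmaller : (⋃ j ∈ Set.Iio e, {T : PTree | Valid10 T ∧ T.edges = j}).Finite :=
    (Set.finite_Iio e).biUnion ih
  refine (((hsmaller.lists_length_le e).prod (List.finite_length_le Bool (e + 1))).image
    fun p => node p.1 p.2).subset ?_
  rintro _ ⟨⟨cs, m, hm, -, -, -, hcs⟩, rfl⟩
  refine ⟨(cs, m), ⟨⟨by simp, fun c hc => ?_⟩, by simp [hm]⟩, rfl⟩
  have := edges_le_sum_of_mem hc
  have := List.length_pos_of_mem hc
  simp only [Set.mem_iUnion, Set.mem_Iio, edges_node] at *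
  exact ⟨c.edges, by omega, hcs c hc, rfl⟩

noncomputable def validTrees (e : ℕ) : Finset PTree :=
  (finite_setOf_valid10_edges_eq e).toFinset

@[simp] lemma mem_validTrees {e : ℕ} {T : PTree} : T ∈ validTrees e ↔ Valid10 T ∧ T.edges = e :=
  Set.Finite.mem_toFinset _

theorem finite_setOf_validForests (k n : ℕ) :
    {cs : List PTree | cs.length = k ∧ (∀ c ∈ cs, Valid10 c) ∧ (cs.map edges).sum = n}.Finite := by
  have hsmall : (⋃ j ∈ Set.Iic n, {T : PTree | Valid10 T ∧ T.edges = j}).Finite :=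
    (Set.finite_Iic n).biUnion fun j _ => finite_setOf_valid10_edges_eq j
  refine (hsmall.lists_length_le k).subset ?_
  rintro cs ⟨rfl, hcs, rfl⟩
  refine ⟨le_rfl, fun c hc => ?_⟩
  simp only [Set.mem_iUnion, Set.mem_Iic]
  exact ⟨c.edges, edges_le_sum_of_mem hc, hcs c hc, rfl⟩

noncomputable def validForests (k n : ℕ) : Finset (List PTree) :=
  (finite_setOf_validForests k n).toFinset

@[simp] lemma mem_validForests {k n : ℕ} {cs : List PTree} :
    cs ∈ validForests k n ↔ cs.length = k ∧ (∀ c ∈ cs, Valid10 c) ∧ (cs.map edges).sum = n :=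
  Set.Finite.mem_toFinset _

lemma coeff_Fgf (e : ℕ) : PowerSeries.coeff e Fgf = ∑ T ∈ validTrees e, T.weight := by
  rw [Fgf, PowerSeries.coeff_mk]
  exact (finsum_set_coe_eq_finsum_mem (f := weight) _).trans (finsum_mem_eq_finite_toFinset_sum _ _)

lemma validTrees_zero : validTrees 0 = {node [] [false]} := by
  ext ⟨cs, m⟩
  simp only [mem_validTrees, edges_node, mem_singleton, node.injEq]
  constructor
  · rintro ⟨⟨_, _, hm, hleaf, -, -, -⟩, he⟩
    obtain rfl : cs = [] := List.eq_nil_of_length_eq_zero (by omega)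
    obtain ⟨_ | _, rfl⟩ := List.length_eq_one_iff.1 (by simpa using hm) <;> simp_all
  · rintro ⟨rfl, rfl⟩
    exact ⟨.node _ _ rfl (fun _ => rfl) (by decide) (by simp) (by simp), rfl⟩

lemma coeff_zero_Fgf : PowerSeries.coeff 0 Fgf = X 0 := by
  simp [coeff_Fgf, validTrees_zero, weight]

lemma validForests_zero (n : ℕ) : validForests 0 n = if n = 0 then {[]} else ∅ := by
  ext (_ | _) <;> split_ifs <;> simp_all [eq_comm]

lemma coeff_Fgf_pow (k n : ℕ) :
    PowerSeries.coeff n (Fgf ^ k) = ∑ cs ∈ validForests k n, (cs.map weight).prod := by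
  induction k generalizing n with
  | zero =>
    rw [validForests_zero, pow_zero, PowerSeries.coeff_one]
    split_ifs <;> simp
  | succ k ih =>
    simp_rw [pow_succ', PowerSeries.coeff_mul, coeff_Fgf, ih, sum_mul_sum, ← sum_product']
    rw [sum_sigma']
    refine sum_nbij (fun p => p.2.1 :: p.2.2) ?_ ?_ ?_ fun _ _ => rfl
    · rintro ⟨⟨i, j⟩, T, cs⟩ h
      simp only [mem_sigma, HasAntidiagonal.mem_antidiagonal, mem_product, mem_validTrees,
        mem_validForests] at h
      obtain ⟨rfl, ⟨hT, rfl⟩, rfl, hcs, rfl⟩ := h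
      simp_all
    · rintro ⟨⟨i, j⟩, T, cs⟩ h ⟨⟨i', j'⟩, T', cs'⟩ h' heq
      simp only [coe_sigma, Set.mem_sigma_iff, mem_coe, HasAntidiagonal.mem_antidiagonal,
        mem_product, mem_validTrees, mem_validForests] at h h'
      obtain ⟨rfl, rfl⟩ := List.cons_eq_cons.1 heq
      obtain ⟨-, ⟨-, rfl⟩, -, -, rfl⟩ := h
      obtain ⟨-, ⟨-, rfl⟩, -, -, rfl⟩ := h'
      rfl
    · rintro (_ | ⟨T, cs⟩) h
      · simp at h
      simp only [coe_sigma, Set.mem_image, Set.mem_sigma_iff, mem_coe,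
        HasAntidiagonal.mem_antidiagonal, mem_product, mem_validTrees, mem_validForests] at h ⊢
      obtain ⟨hlen, hvalid, rfl⟩ := h
      exact ⟨⟨(T.edges, (cs.map edges).sum), T, cs⟩,
        ⟨by simp, ⟨hvalid T (by simp), rfl⟩, by simpa using hlen,
          fun c hc => hvalid c (by simp [hc]), rfl⟩, rfl⟩

theorem sum_validTrees_weight {e : ℕ} (he : 1 ≤ e) :
    ∑ T ∈ validTrees e, T.weight =
      ∑ k ∈ Icc 1 e, (∑ m ∈ rootMarks k, X 1 ^ m.count true) *
        ∑ cs ∈ validForests k (e - k), (cs.map weight).prod := by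
  simp_rw [sum_mul_sum, ← sum_product']
  rw [sum_sigma']
  refine sum_nbij' (fun T => ⟨T.children.length, T.marks, T.children⟩)
    (fun p => node p.2.2 p.2.1) ?_ ?_ (fun T _ => node_children_marks T) ?_ ?_
  · rintro ⟨cs, m⟩ hT
    have hcs : cs ≠ [] := by rintro rfl; simp at hT; omega
    simp only [mem_validTrees, valid10_node_iff hcs, edges_node] at hT
    simp only [children, marks, mem_sigma, mem_Icc, mem_product, mem_validForests]
    exact ⟨⟨List.length_pos_iff.2 hcs, by omega⟩, hT.1.1, trivial, hT.1.2, by omega⟩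
  · rintro ⟨k, m, cs⟩ h
    simp only [mem_sigma, mem_Icc, mem_product, mem_validForests] at h
    obtain ⟨⟨hk, hke⟩, hm, rfl, hcs, hsum⟩ := h
    have hne : cs ≠ [] := List.length_pos_iff.1 hk
    simp only [mem_validTrees, valid10_node_iff hne, edges_node]
    exact ⟨⟨hm, hcs⟩, by omega⟩
  · rintro ⟨k, m, cs⟩ h
    simp only [mem_sigma, mem_product, mem_validForests] at h
    obtain ⟨-, -, rfl, -⟩ := h
    rfl
  · rintro ⟨cs, m⟩ hT
    have hcs : cs ≠ [] := by rintro rfl; simp at hT; omega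
    exact weight_node m hcs

theorem X_pow_succ_dvd_Fgf_sub (N : ℕ) :
    PowerSeries.X ^ (N + 1) ∣ Fgf - (u + ∑ k ∈ Icc 1 N,
      PowerSeries.C (∑ m ∈ rootMarks k, X 1 ^ m.count true) * (x * Fgf) ^ k) := by
  refine PowerSeries.X_pow_dvd_iff.2 fun d hd => ?_
  simp_rw [map_sub, map_add, map_sum (PowerSeries.coeff d), mul_pow, mul_left_comm _ (x ^ _),
    PowerSeries.coeff_X_pow_mul', PowerSeries.coeff_C_mul, ← sum_filter]
  rw [show {k ∈ Icc 1 N | k ≤ d} = Icc 1 d by ext; simp; omega, sub_eq_zero]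
  rcases Nat.eq_zero_or_pos d with rfl | hd
  · simp [coeff_zero_Fgf]
  · rw [coeff_Fgf, sum_validTrees_weight hd, PowerSeries.coeff_C, if_neg hd.ne', zero_add]
    simp_rw [coeff_Fgf_pow]

/-- Truncations of `∑_{k ≥ 2} aᵏ = a² / (1 - a)` and `∑_{k ≥ 0} (k + 1) aᵏ = 1 / (1 - a)²`. -/
theorem one_sub_sq_mul_sum_Icc {R : Type*} [CommRing R] (a b : R) (N : ℕ) :
    (1 - a) ^ 2 * ∑ k ∈ Icc 1 (N + 1), ((if k = 1 then 0 else 1) + (k + 1) * b) * a ^ k =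
      (1 - a) * a ^ 2 + b * (1 - (1 - a) ^ 2) -
        a ^ (N + 2) * (1 - a + b * (N + 3 - (N + 2) * a)) := by
  induction N with
  | zero => simp; ring
  | succ N ih =>
    rw [sum_Icc_succ_top (by omega), mul_add, ih, if_neg (by omega)]
    push_cast
    ring

theorem PowerSeries.eq_of_forall_X_pow_dvd_sub {R : Type*} [Ring R] {f g : PowerSeries R}
    (h : ∀ N, PowerSeries.X ^ N ∣ f - g) : f = g := by
  ext d
  simpa [sub_eq_zero] using PowerSeries.X_pow_dvd_iff.1 (h (d + 1)) d (Nat.lt_succ_self d)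

/-- `F = u + x²F²/(1−xF) + v/(1−xF)² − v`, stated in the equivalent
multiplied form (the denominator `1 − xF` has constant term 1, hence is
invertible). -/
theorem Fgf_eq :
    (1 - x * Fgf) ^ 2 * Fgf
      = (1 - x * Fgf) ^ 2 * (u - v) + (1 - x * Fgf) * x ^ 2 * Fgf ^ 2 + v := by
  refine PowerSeries.eq_of_forall_X_pow_dvd_sub fun N => ?_
  obtain ⟨D, hD⟩ := X_pow_succ_dvd_Fgf_sub (N + 1)
  have hroot : ∀ k ∈ Icc 1 (N + 1), PowerSeries.C (∑ m ∈ rootMarks k, X 1 ^ m.count true) =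
      (if k = 1 then 0 else 1) + ((k : PowerSeries _) + 1) * v := fun k hk => by
    simpa only [map_sum, map_pow] using sum_pow_count_rootMarks v (mem_Icc.1 hk).1
  rw [sum_congr rfl fun k hk => by rw [hroot k hk]] at hD
  have htrunc := one_sub_sq_mul_sum_Icc (x * Fgf) v N
  refine (pow_dvd_pow _ (by omega : N ≤ N + 2)).trans ⟨(1 - x * Fgf) ^ 2 * D -
    Fgf ^ (N + 2) * (1 - x * Fgf + v * (N + 3 - (N + 2) * (x * Fgf))), ?_⟩
  linear_combination (1 - x * Fgf) ^ 2 * hD + htrunc
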